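/- Let l₁, l₂ : (0,∞) → ℝ be measurable functions that are positive for t ≥ t₀ and satisfy l₁(t) + l₂(t) ≤ (2+ε)π for all t ≥ t₀, where ε > 0. If G ⊆ (t₀,∞) is a measurable set and π ∫_G dt/(t·l₁(t)) ≤ α ∫_G dt/t for some α ≥ 1/2, then π ∫_G dt/(t·l₂(t)) ≥ (α/((2+ε)α − 1)) ∫_G dt/t. -/

import Mathlib

open MeasureTheory Real

/-! With `x = l₁/π`, `y = l₂/π` and `D = (2+ε)α - 1`, Cauchy–Schwarz gives
`(D²/y + 1/x)(x + y) ≥ (D + 1)² = (2+ε)²α²`, hence `(2+ε)α² ≤ D²/y + 1/x` pointwise.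
Integrating against `dt/t` over `G` and using the hypothesis on `∫ 1/x` yields
`(2+ε)α² I ≤ D² π ∫ dt/(t l₂) + α I` with `I = ∫_G dt/t`, and `(2+ε)α² - α = αD`.
If `I = ∞` the cancellation fails, but then `π/l₂ ≥ 1/(2+ε)` already makes the left side
infinite. -/

theorem mul_sq_le_sq_div_add_one_div {κ a x y : ℝ} (hx : 0 < x) (hy : 0 < y)
    (hxy : x + y ≤ κ) :
    κ * a ^ 2 ≤ (κ * a - 1) ^ 2 / y + 1 / x := by
  rw [div_add_div _ _ hy.ne' hx.ne', le_div_iff₀ (by positivity)]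
  nlinarith [sq_nonneg ((κ * a - 1) * x - y), mul_pos hx hy,
    mul_le_mul_of_nonneg_left hxy (mul_nonneg (mul_nonneg hx.le hy.le) (sq_nonneg a))]

theorem ENNReal.ofReal_mul_sq_le_of_add_le {κ a p t u v : ℝ} (hp : 0 < p) (hu : 0 < u)
    (hv : 0 < v) (huv : u + v ≤ κ * p) :
    ENNReal.ofReal (κ * a ^ 2) * ENNReal.ofReal (1 / t) ≤
      ENNReal.ofReal ((κ * a - 1) ^ 2) * (ENNReal.ofReal p * ENNReal.ofReal (1 / (t * v))) +
        ENNReal.ofReal p * ENNReal.ofReal (1 / (t * u)) := by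
  rcases le_or_gt t 0 with ht | ht
  · rw [ENNReal.ofReal_eq_zero.2 (one_div_nonpos.2 ht), mul_zero]
    exact zero_le
  have hκ : 0 < κ := by nlinarith
  have key := mul_sq_le_sq_div_add_one_div (a := a) (div_pos hu hp) (div_pos hv hp)
    (by rwa [← add_div, div_le_iff₀ hp])
  rw [← ENNReal.ofReal_mul hp.le, ← ENNReal.ofReal_mul hp.le,
    ← ENNReal.ofReal_mul (sq_nonneg _), ← ENNReal.ofReal_add (by positivity) (by positivity),
    ← ENNReal.ofReal_mul (by positivity)]
  apply ENNReal.ofReal_le_ofReal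
  calc κ * a ^ 2 * (1 / t) ≤ ((κ * a - 1) ^ 2 / (v / p) + 1 / (u / p)) * (1 / t) := by gcongr
    _ = _ := by field_simp

theorem ENNReal.ofReal_one_div_le_of_le {κ p t v : ℝ} (hp : 0 < p) (hv : 0 < v)
    (hvκ : v ≤ κ * p) :
    ENNReal.ofReal (1 / t) ≤
      ENNReal.ofReal κ * (ENNReal.ofReal p * ENNReal.ofReal (1 / (t * v))) := by
  rcases le_or_gt t 0 with ht | ht
  · rw [ENNReal.ofReal_eq_zero.2 (one_div_nonpos.2 ht)]
    exact zero_le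
  rw [← ENNReal.ofReal_mul hp.le, ← ENNReal.ofReal_mul (by nlinarith)]
  apply ENNReal.ofReal_le_ofReal
  calc 1 / t ≤ κ * p / v * (1 / t) :=
        le_mul_of_one_le_left (by positivity) ((one_le_div hv).2 hvκ)
    _ = _ := by field_simp

theorem lintegral_le_of_mul_sq_le {X : Type*} [MeasurableSpace X] {μ : Measure X} {κ α : ℝ}
    (hα : 0 ≤ α) (hD : 0 < κ * α - 1) {w f₁ f₂ : X → ENNReal} (hf₂ : Measurable f₂)
    (h_sq : ∀ᵐ x ∂μ,
      ENNReal.ofReal (κ * α ^ 2) * w x ≤ ENNReal.ofReal ((κ * α - 1) ^ 2) * f₂ x + f₁ x)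
    (h_lower : ∀ᵐ x ∂μ, w x ≤ ENNReal.ofReal κ * f₂ x)
    (h₁ : ∫⁻ x, f₁ x ∂μ ≤ ENNReal.ofReal α * ∫⁻ x, w x ∂μ) :
    ENNReal.ofReal (α / (κ * α - 1)) * ∫⁻ x, w x ∂μ ≤ ∫⁻ x, f₂ x ∂μ := by
  set D := κ * α - 1 with hD_def
  set I := ∫⁻ x, w x ∂μ
  set J₂ := ∫⁻ x, f₂ x ∂μ
  have hI_le : I ≤ ENNReal.ofReal κ * J₂ := by
    rw [← lintegral_const_mul' _ _ ENNReal.ofReal_ne_top]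
    exact lintegral_mono_ae h_lower
  have h_int :
      ENNReal.ofReal (κ * α ^ 2) * I ≤ ENNReal.ofReal (D ^ 2) * J₂ + ∫⁻ x, f₁ x ∂μ := by
    rw [← lintegral_const_mul' _ _ ENNReal.ofReal_ne_top,
      ← lintegral_const_mul' _ _ ENNReal.ofReal_ne_top,
      ← lintegral_add_left (hf₂.const_mul _)]
    exact lintegral_mono_ae h_sq
  by_cases hI : I = ⊤
  · obtain ⟨-, hJ₂⟩ : 0 < κ ∧ J₂ = ⊤ := by
      simpa [hI, ENNReal.mul_eq_top] using hI_le
    simp [hJ₂]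
  have h_cancel : ENNReal.ofReal (α * D) * I ≤ ENNReal.ofReal (D ^ 2) * J₂ := by
    refine ENNReal.le_of_add_le_add_right
      (ENNReal.mul_ne_top (ENNReal.ofReal_ne_top (r := α)) hI) ?_
    calc ENNReal.ofReal (α * D) * I + ENNReal.ofReal α * I
        = ENNReal.ofReal (κ * α ^ 2) * I := by
          rw [← add_mul, ← ENNReal.ofReal_add (by positivity) hα, hD_def]
          ring_nf
      _ ≤ ENNReal.ofReal (D ^ 2) * J₂ + ∫⁻ x, f₁ x ∂μ := h_int
      _ ≤ ENNReal.ofReal (D ^ 2) * J₂ + ENNReal.ofReal α * I := by gcongr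
  calc ENNReal.ofReal (α / D) * I = ENNReal.ofReal (α * D) * I / ENNReal.ofReal (D ^ 2) := by
        rw [ENNReal.mul_div_right_comm, ← ENNReal.ofReal_div_of_pos (by positivity)]
        congr 2
        field_simp
    _ ≤ J₂ := ENNReal.div_le_of_le_mul' h_cancel

theorem stmt_0_general (t₀ ε α : ℝ) (hε : 0 < ε) (hα : 1 / 2 ≤ α)
    (l₁ l₂ : ℝ → ℝ) (hm₂ : Measurable l₂)
    (hpos₁ : ∀ t, t₀ ≤ t → 0 < l₁ t) (hpos₂ : ∀ t, t₀ ≤ t → 0 < l₂ t)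
    (hsum : ∀ t, t₀ ≤ t → l₁ t + l₂ t ≤ (2 + ε) * π)
    (G : Set ℝ) (hG : MeasurableSet G) (hGsub : G ⊆ Set.Ioi t₀)
    (hyp : ENNReal.ofReal π * ∫⁻ t in G, ENNReal.ofReal (1 / (t * l₁ t)) ≤
        ENNReal.ofReal α * ∫⁻ t in G, ENNReal.ofReal (1 / t)) :
    ENNReal.ofReal π * ∫⁻ t in G, ENNReal.ofReal (1 / (t * l₂ t)) ≥
      ENNReal.ofReal (α / ((2 + ε) * α - 1)) * ∫⁻ t in G, ENNReal.ofReal (1 / t) := by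
  have hD : 0 < (2 + ε) * α - 1 := by nlinarith
  rw [← lintegral_const_mul' _ _ ENNReal.ofReal_ne_top] at hyp
  refine (lintegral_le_of_mul_sq_le (by linarith) hD (by fun_prop) ?_ ?_ hyp).trans_eq
    (lintegral_const_mul' _ _ ENNReal.ofReal_ne_top)
  · refine ae_restrict_of_forall_mem hG fun t ht => ?_
    have ht₀ : t₀ ≤ t := (hGsub ht).le
    exact ENNReal.ofReal_mul_sq_le_of_add_le pi_pos (hpos₁ t ht₀) (hpos₂ t ht₀)
      (hsum t ht₀)
  · refine ae_restrict_of_forall_mem hG fun t ht => ?_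
    have ht₀ : t₀ ≤ t := (hGsub ht).le
    exact ENNReal.ofReal_one_div_le_of_le pi_pos (hpos₂ t ht₀)
      (by linarith [hpos₁ t ht₀, hsum t ht₀])

/-- Lemma 3 (Eremenko–Rossi): if `l₁, l₂` are positive measurable functions on `[t₀, ∞)` with
`l₁ + l₂ ≤ (2+ε)π` there, `G ⊆ (t₀, ∞)` is measurable and
`π ∫_G dt/(t l₁ t) ≤ α ∫_G dt/t` with `α ≥ 1/2`, then
`π ∫_G dt/(t l₂ t) ≥ (α/((2+ε)α − 1)) ∫_G dt/t`. -/
theorem stmt_0 (t₀ ε α : ℝ) (hε : 0 < ε) (hα : 1 / 2 ≤ α)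
    (l₁ l₂ : ℝ → ℝ) (hm₁ : Measurable l₁) (hm₂ : Measurable l₂)
    (hpos₁ : ∀ t, t₀ ≤ t → 0 < l₁ t) (hpos₂ : ∀ t, t₀ ≤ t → 0 < l₂ t)
    (hsum : ∀ t, t₀ ≤ t → l₁ t + l₂ t ≤ (2 + ε) * π)
    (G : Set ℝ) (hG : MeasurableSet G) (hGsub : G ⊆ Set.Ioi t₀)
    (hyp : ENNReal.ofReal π * ∫⁻ t in G, ENNReal.ofReal (1 / (t * l₁ t)) ≤
        ENNReal.ofReal α * ∫⁻ t in G, ENNReal.ofReal (1 / t)) :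
    ENNReal.ofReal π * ∫⁻ t in G, ENNReal.ofReal (1 / (t * l₂ t)) ≥
      ENNReal.ofReal (α / ((2 + ε) * α - 1)) * ∫⁻ t in G, ENNReal.ofReal (1 / t) :=
  stmt_0_general t₀ ε α hε hα l₁ l₂ hm₂ hpos₁ hpos₂ hsum G hG hGsub hyp
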